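/- Let S ⊆ B(H) and T ⊆ B(K) be concrete operator systems. Then S and T are TRO-equivalent (i.e., there exists a non-degenerate TRO M ⊆ B(H,K) with M* T M ⊆ closure(S) and M S M* ⊆ closure(T)) if and only if there exists a TRO M ⊆ B(H,K) such that the closed linear span of M* T M equals closure(S) and the closed linear span of M S M* equals closure(T). -/

import Mathlib

/-!
For the forward direction, write `s = 1 * s * 1` with `1` a limit of `span (M* M)` on both sides;
since `(a* b) s (c* d) = a* (b s c*) d` and `b s c* ∈ closure T`, every such product lies in
`[M* T M]`.

For the converse, `[M* M]` is a C*-algebra. Along its approximate unit `e` we have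
`‖m - m e‖² ≤ 2 ‖m* m - m* m e‖ → 0` for `m ∈ M`, hence `x e → x` for all `x ∈ span (M* T M)`.
As `1 ∈ [M* T M]`, some such `x` is invertible, so `e → 1` and `1 ∈ [M* M]`.

In both directions, the statements about `M M*` are those about `M* M` applied to the TRO `M*`.
-/

open ContinuousLinearMap

/-- The set of products `a ∘L b` with `a ∈ A`, `b ∈ B`. -/
def opMulSet {H K L : Type*} [NormedAddCommGroup H] [NormedSpace ℂ H]
    [NormedAddCommGroup K] [NormedSpace ℂ K] [NormedAddCommGroup L] [NormedSpace ℂ L]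
    (A : Set (K →L[ℂ] L)) (B : Set (H →L[ℂ] K)) : Set (H →L[ℂ] L) :=
  {x | ∃ a ∈ A, ∃ b ∈ B, x = a ∘L b}

/-- The set of adjoints of elements of `M`. -/
noncomputable def opAdjSet {H K : Type*}
    [NormedAddCommGroup H] [InnerProductSpace ℂ H] [CompleteSpace H]
    [NormedAddCommGroup K] [InnerProductSpace ℂ K] [CompleteSpace K]
    (M : Set (H →L[ℂ] K)) : Set (K →L[ℂ] H) :=
  {x | ∃ m ∈ M, x = adjoint m}

/-- Closed linear span. -/
def cSpan {E : Type*} [NormedAddCommGroup E] [NormedSpace ℂ E] (s : Set E) : Set E :=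
  closure ((Submodule.span ℂ s : Submodule ℂ E) : Set E)

open Filter Topology

section cSpan

variable {E F : Type*} [NormedAddCommGroup E] [NormedSpace ℂ E]
  [NormedAddCommGroup F] [NormedSpace ℂ F]

lemma subset_cSpan (s : Set E) : s ⊆ cSpan s :=
  Submodule.subset_span.trans subset_closure

lemma coe_topologicalClosure_span (s : Set E) :
    ((Submodule.span ℂ s).topologicalClosure : Set E) = cSpan s :=
  Submodule.topologicalClosure_coe _

lemma ContinuousLinearMap.mapsTo_cSpan (φ : E →L[ℂ] F) {s : Set E} {t : Set F}
    (h : Set.MapsTo φ s (cSpan t)) : Set.MapsTo φ (cSpan s) (cSpan t) := by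
  have hspan : Submodule.span ℂ s ≤
      (Submodule.span ℂ t).topologicalClosure.comap (φ : E →ₗ[ℂ] F) := by
    rw [Submodule.span_le]
    intro x hx
    have := h hx
    rwa [← coe_topologicalClosure_span] at this
  refine closure_minimal (fun x hx => hspan hx) ?_
  rw [← coe_topologicalClosure_span]
  exact (Submodule.isClosed_topologicalClosure _).preimage φ.continuous

lemma cSpan_eq_closure {s : Set E} {W : Submodule ℂ E} (hsW : s ⊆ closure W)
    (hWs : (W : Set E) ⊆ cSpan s) : cSpan s = closure W := by
  have hW : cSpan (W : Set E) = closure W := by rw [cSpan, Submodule.span_eq]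
  refine (closure_minimal hWs isClosed_closure).antisymm' fun x hx => ?_
  rw [← hW]
  exact (ContinuousLinearMap.id ℂ E).mapsTo_cSpan (fun y hy => hW ▸ hsW hy) hx

end cSpan

def spanStarSubalgebra {A : Type*} [Ring A] [StarRing A] [Algebra ℂ A] [StarModule ℂ A]
    (P : Set A) (hmul : ∀ p ∈ P, ∀ q ∈ P, p * q ∈ P) (hstar : ∀ p ∈ P, star p ∈ P) :
    NonUnitalStarSubalgebra ℂ A where
  toNonUnitalSubalgebra := (Submodule.span ℂ P).toNonUnitalSubalgebra fun x y hx hy =>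
    Submodule.span_mono (by rintro _ ⟨p, hp, q, hq, rfl⟩; exact hmul p hp q hq)
      (Submodule.span_mul_span ℂ P P ▸ Submodule.mul_mem_mul hx hy)
  star_mem' {x} (hx : x ∈ Submodule.span ℂ P) := by
    change star x ∈ Submodule.span ℂ P
    induction hx using Submodule.span_induction with
    | mem p hp => exact Submodule.subset_span (hstar p hp)
    | zero => simp
    | add x y _ _ hx hy => simpa only [star_add] using add_mem hx hy
    | smul c x _ hx => simpa only [star_smul] using Submodule.smul_mem _ _ hx

lemma le_nhds_one_of_tendsto_mul_left {𝕜 R : Type*} [NontriviallyNormedField 𝕜] [NormedRing R]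
    [NormedAlgebra 𝕜 R] [CompleteSpace R] {l : Filter R} {G : Set R}
    (hG : ∀ g ∈ G, Tendsto (g * ·) l (𝓝 g))
    (h1 : (1 : R) ∈ closure (Submodule.span 𝕜 G : Set R)) : l ≤ 𝓝 1 := by
  have hspan : ∀ y ∈ Submodule.span 𝕜 G, Tendsto (y * ·) l (𝓝 y) := by
    intro y hy
    induction hy using Submodule.span_induction with
    | mem g hg => exact hG g hg
    | zero => simpa using tendsto_const_nhds
    | add y z _ _ hy hz => simpa only [add_mul] using hy.add hz
    | smul c y _ hy => simpa only [smul_mul_assoc] using hy.const_smul c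
  obtain ⟨y, hy, hy1⟩ := Metric.mem_closure_iff.1 h1 1 one_pos
  rw [dist_eq_norm] at hy1
  -- `y` is invertible, and left multiplication by its inverse turns `y * e → y` into `e → 1`.
  let u := Units.oneSub (1 - y) hy1
  have hu : (u : R) = y := by simp [u]
  have hid : Tendsto (fun e : R => e) l (𝓝 1) := by
    simpa [← mul_assoc, ← hu] using (hspan y hy).const_mul (u⁻¹ : Rˣ).val
  exact hid

section Operators

variable {H K : Type*} [NormedAddCommGroup H] [InnerProductSpace ℂ H] [CompleteSpace H]
  [NormedAddCommGroup K] [InnerProductSpace ℂ K] [CompleteSpace K]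

lemma tendsto_comp_of_tendsto_adjoint_comp_self_comp (w : H →L[ℂ] K) {l : Filter (H →L[ℂ] H)}
    (hl : ∀ᶠ e in l, ‖e‖ ≤ 1)
    (h : Tendsto ((adjoint w ∘L w) ∘L ·) l (𝓝 (adjoint w ∘L w))) :
    Tendsto (w ∘L ·) l (𝓝 w) := by
  set a := adjoint w ∘L w
  have hbound : ∀ e : H →L[ℂ] H, ‖e‖ ≤ 1 → ‖w ∘L e - w‖ ≤ √(2 * ‖a ∘L e - a‖) := by
    intro e he
    rw [Real.le_sqrt (norm_nonneg _) (by positivity)]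
    have h1 : ‖e - 1‖ ≤ 2 := by
      have : ‖(1 : H →L[ℂ] H)‖ ≤ 1 := norm_id_le
      linarith [norm_sub_le e 1]
    calc ‖w ∘L e - w‖ ^ 2 = ‖adjoint (e - 1) ∘L (a ∘L e - a)‖ := by
          rw [sq, ← norm_adjoint_comp_self]
          congr 1
          simp [a, adjoint_comp, comp_sub, sub_comp, comp_assoc, one_def, adjoint_id]
      _ ≤ ‖adjoint (e - 1)‖ * ‖a ∘L e - a‖ := opNorm_comp_le _ _
      _ = ‖e - 1‖ * ‖a ∘L e - a‖ := by rw [LinearIsometryEquiv.norm_map]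
      _ ≤ 2 * ‖a ∘L e - a‖ := mul_le_mul_of_nonneg_right h1 (norm_nonneg _)
  rw [tendsto_iff_norm_sub_tendsto_zero] at h ⊢
  refine squeeze_zero' (.of_forall fun _ => norm_nonneg _) (hl.mono hbound) ?_
  simpa using (h.const_mul 2).sqrt

def IsTRO (M : Set (H →L[ℂ] K)) : Prop :=
  ∀ a ∈ M, ∀ b ∈ M, ∀ c ∈ M, a ∘L adjoint b ∘L c ∈ M

lemma opAdjSet_opAdjSet (M : Set (H →L[ℂ] K)) : opAdjSet (opAdjSet M) = M := by
  ext x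
  simp [opAdjSet]

variable {M : Set (H →L[ℂ] K)}

lemma IsTRO.star (hM : IsTRO M) : IsTRO (opAdjSet M) := by
  rintro _ ⟨a, ha, rfl⟩ _ ⟨b, hb, rfl⟩ _ ⟨c, hc, rfl⟩
  exact ⟨c ∘L adjoint b ∘L a, hM c hc b hb a ha, by simp [adjoint_comp, comp_assoc]⟩

lemma IsTRO.mul_mem_adjoint_mul (hM : IsTRO M)
    {p q : H →L[ℂ] H} (hp : p ∈ opMulSet (opAdjSet M) M) (hq : q ∈ opMulSet (opAdjSet M) M) :
    p * q ∈ opMulSet (opAdjSet M) M := by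
  obtain ⟨_, ⟨a, ha, rfl⟩, b, hb, rfl⟩ := hp
  obtain ⟨_, ⟨c, hc, rfl⟩, d, hd, rfl⟩ := hq
  exact ⟨_, ⟨a, ha, rfl⟩, b ∘L adjoint c ∘L d, hM b hb c hc d hd, by simp [mul_def, comp_assoc]⟩

lemma star_mem_adjoint_mul {p : H →L[ℂ] H}
    (hp : p ∈ opMulSet (opAdjSet M) M) : star p ∈ opMulSet (opAdjSet M) M := by
  obtain ⟨_, ⟨a, ha, rfl⟩, b, hb, rfl⟩ := hp
  exact ⟨_, ⟨b, hb, rfl⟩, a, ha, by simp [star_eq_adjoint, adjoint_comp]⟩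

lemma subset_cSpan_of_one_mem_cSpan (h1 : (1 : H →L[ℂ] H) ∈ cSpan (opMulSet (opAdjSet M) M))
    {S : Set (H →L[ℂ] H)} {T : Set (K →L[ℂ] K)}
    (hST : opMulSet M (opMulSet S (opAdjSet M)) ⊆ closure T) :
    S ⊆ cSpan (opMulSet (opAdjSet M) (opMulSet T M)) := by
  intro s hs
  have hmiddle : ∀ p ∈ opMulSet (opAdjSet M) M, ∀ q ∈ opMulSet (opAdjSet M) M,
      (p ∘L s) ∘L q ∈ cSpan (opMulSet (opAdjSet M) (opMulSet T M)) := by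
    rintro _ ⟨_, ⟨a, ha, rfl⟩, b, hb, rfl⟩ _ ⟨_, ⟨c, hc, rfl⟩, d, hd, rfl⟩
    have hbsc : b ∘L s ∘L adjoint c ∈ closure T :=
      hST ⟨b, hb, s ∘L adjoint c, ⟨s, hs, adjoint c, ⟨c, hc, rfl⟩, rfl⟩, rfl⟩
    have := ((compL ℂ H K H (adjoint a)).comp ((compL ℂ H K K).flip d)).mapsTo_cSpan
      (t := opMulSet (opAdjSet M) (opMulSet T M))
      (fun t ht => subset_cSpan _ ⟨_, ⟨a, ha, rfl⟩, t ∘L d, ⟨t, ht, d, hd, rfl⟩, rfl⟩)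
      (closure_mono Submodule.subset_span hbsc)
    simpa [comp_assoc] using this
  have hleft : ∀ p ∈ opMulSet (opAdjSet M) M,
      p ∘L s ∈ cSpan (opMulSet (opAdjSet M) (opMulSet T M)) := fun p hp => by
    simpa [one_def] using (compL ℂ H H H (p ∘L s)).mapsTo_cSpan (hmiddle p hp) h1
  simpa [one_def] using ((compL ℂ H H H).flip s).mapsTo_cSpan hleft h1

lemma IsTRO.one_mem_cSpan_adjoint_mul (hM : IsTRO M) {T : Set (K →L[ℂ] K)}
    (h1 : (1 : H →L[ℂ] H) ∈ cSpan (opMulSet (opAdjSet M) (opMulSet T M))) :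
    (1 : H →L[ℂ] H) ∈ cSpan (opMulSet (opAdjSet M) M) := by
  let A := (spanStarSubalgebra _ (fun p hp q hq => hM.mul_mem_adjoint_mul hp hq)
    (fun p hp => star_mem_adjoint_mul hp)).topologicalClosure
  have hA : (A : Set (H →L[ℂ] H)) = cSpan (opMulSet (opAdjSet M) M) := rfl
  have hAclosed : IsClosed (A : Set (H →L[ℂ] H)) :=
    NonUnitalStarSubalgebra.isClosed_topologicalClosure _
  let _ := CStarAlgebra.spectralOrder A
  have := CStarAlgebra.spectralOrderedRing A
  have hU := CStarAlgebra.increasingApproximateUnit A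
  let l : Filter (H →L[ℂ] H) := map (↑) (CStarAlgebra.approximateUnit A)
  have hmul : ∀ a ∈ A, Tendsto (a * ·) l (𝓝 a) := fun a ha =>
    tendsto_map'_iff.2 ((continuous_subtype_val.tendsto _).comp (hU.tendsto_mul_left ⟨a, ha⟩))
  have hM_tendsto : ∀ m ∈ M, Tendsto (m ∘L ·) l (𝓝 m) := fun m hm =>
    tendsto_comp_of_tendsto_adjoint_comp_self_comp m (eventually_map.2 hU.eventually_norm)
      (hmul _ (subset_cSpan _ ⟨_, ⟨m, hm, rfl⟩, m, hm, rfl⟩))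
  have hG : ∀ g ∈ opMulSet (opAdjSet M) (opMulSet T M), Tendsto (g * ·) l (𝓝 g) := by
    rintro _ ⟨_, ⟨m, hm, rfl⟩, _, ⟨t, ht, n, hn, rfl⟩, rfl⟩
    simpa [Function.comp_def, mul_def, comp_assoc] using
      ((compL ℂ H K H (adjoint m ∘L t)).continuous.tendsto _).comp (hM_tendsto n hn)
  rw [← hA, ← hAclosed.closure_eq]
  exact mem_closure_of_tendsto (le_nhds_one_of_tendsto_mul_left hG h1)
    (.of_forall fun e => e.2)

end Operators

theorem stmt_2 {H K : Type*} [NormedAddCommGroup H] [InnerProductSpace ℂ H] [CompleteSpace H]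
    [NormedAddCommGroup K] [InnerProductSpace ℂ K] [CompleteSpace K]
    (S : Submodule ℂ (H →L[ℂ] H)) (hS1 : (1 : H →L[ℂ] H) ∈ S)
    (T : Submodule ℂ (K →L[ℂ] K)) (hT1 : (1 : K →L[ℂ] K) ∈ T) :
    (∃ M : Submodule ℂ (H →L[ℂ] K),
      (∀ a ∈ M, ∀ b ∈ M, ∀ c ∈ M, a ∘L adjoint b ∘L c ∈ M) ∧
      (1 : H →L[ℂ] H) ∈
        cSpan (opMulSet (opAdjSet (M : Set (H →L[ℂ] K))) (M : Set (H →L[ℂ] K))) ∧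
      (1 : K →L[ℂ] K) ∈
        cSpan (opMulSet (M : Set (H →L[ℂ] K)) (opAdjSet (M : Set (H →L[ℂ] K)))) ∧
      opMulSet (opAdjSet (M : Set (H →L[ℂ] K)))
          (opMulSet (T : Set (K →L[ℂ] K)) (M : Set (H →L[ℂ] K)))
        ⊆ closure (S : Set (H →L[ℂ] H)) ∧
      opMulSet (M : Set (H →L[ℂ] K))
          (opMulSet (S : Set (H →L[ℂ] H)) (opAdjSet (M : Set (H →L[ℂ] K))))
        ⊆ closure (T : Set (K →L[ℂ] K)))
    ↔
    (∃ M : Submodule ℂ (H →L[ℂ] K),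
      (∀ a ∈ M, ∀ b ∈ M, ∀ c ∈ M, a ∘L adjoint b ∘L c ∈ M) ∧
      cSpan (opMulSet (opAdjSet (M : Set (H →L[ℂ] K)))
          (opMulSet (T : Set (K →L[ℂ] K)) (M : Set (H →L[ℂ] K))))
        = closure (S : Set (H →L[ℂ] H)) ∧
      cSpan (opMulSet (M : Set (H →L[ℂ] K))
          (opMulSet (S : Set (H →L[ℂ] H)) (opAdjSet (M : Set (H →L[ℂ] K)))))
        = closure (T : Set (K →L[ℂ] K))) := by
  constructor
  · rintro ⟨M, hM, h1H, h1K, hTS, hST⟩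
    have hTM := subset_cSpan_of_one_mem_cSpan (M := opAdjSet (M : Set (H →L[ℂ] K)))
      (S := (T : Set (K →L[ℂ] K))) (T := (S : Set (H →L[ℂ] H)))
    simp only [opAdjSet_opAdjSet] at hTM
    exact ⟨M, hM, cSpan_eq_closure hTS (subset_cSpan_of_one_mem_cSpan h1H hST),
      cSpan_eq_closure hST (hTM h1K hTS)⟩
  · rintro ⟨M, hM, hS, hT⟩
    have hM' : IsTRO (M : Set (H →L[ℂ] K)) := hM
    have h1K := hM'.star.one_mem_cSpan_adjoint_mul (T := (S : Set (H →L[ℂ] H)))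
    rw [opAdjSet_opAdjSet] at h1K
    exact ⟨M, hM, hM'.one_mem_cSpan_adjoint_mul (hS ▸ subset_closure hS1),
      h1K (hT ▸ subset_closure hT1), hS ▸ subset_cSpan _, hT ▸ subset_cSpan _⟩
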